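/- arXiv:0811.3774 — 6 statements merged into one kernel-verified Lean document; each statement's English description precedes it below -/
import Mathlib

section
/- Every G-structured F-algebra has exactly |G| automorphisms (as a G-structured algebra). -/
/-- An idempotent `e` of a commutative ring is primitive if it is nonzero and cannot be
properly refined: any idempotent below it is `0` or `e` itself. -/
def IsPrimitiveIdempotent {R : Type*} [CommRing R] (e : R) : Prop :=
  IsIdempotentElem e ∧ e ≠ 0 ∧
    ∀ f : R, IsIdempotentElem f → f * e = f → f = 0 ∨ f = e

/-- A `G`-structured `F`-algebra: an étale `F`-algebra of degree `|G|` together with an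
inclusion of `G` into its `F`-algebra automorphisms acting transitively on the primitive
idempotents. -/
structure GStructuredAlgebra (F : Type) [Field F] (G : Type) [CommGroup G] [Finite G] where
  carrier : Type
  [isCommRing : CommRing carrier]
  [isAlgebra : Algebra F carrier]
  etale : Algebra.Etale F carrier
  finrank_eq : Module.finrank F carrier = Nat.card G
  action : G →* (carrier ≃ₐ[F] carrier)
  action_injective : Function.Injective action
  transitive : ∀ e e' : carrier, IsPrimitiveIdempotent e → IsPrimitiveIdempotent e' →
    ∃ g : G, action g e = e'

attribute [instance] GStructuredAlgebra.isCommRing GStructuredAlgebra.isAlgebra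

/-!
The automorphisms commuting with `G` form the centralizer `C` of the image of `G` in
`Aut_F(L)`, which contains `G` since `G` is abelian. Write `L ≅ ∏ L/𝔪` over its `n` maximal
ideals. Transitivity of `G` on primitive idempotents means transitivity on the `𝔪`, so all
residue fields have the same degree `d` and `n * d = |G|`. By orbit–stabilizer
`|C| ≤ n * |Stab_C(𝔪₀)|`, and the stabilizer embeds into `Aut_F(L/𝔪₀)`, of order at most `d`:
an element of `C` acting trivially on `L/𝔪₀` acts trivially on every `L/g𝔪₀` because it commutes
with `g`, hence trivially on `L`, whose Jacobson radical vanishes.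
-/

open scoped Pointwise

theorem IsPrimitiveIdempotent.map {R S : Type*} [CommRing R] [CommRing S] (σ : R ≃+* S)
    {e : R} (he : IsPrimitiveIdempotent e) : IsPrimitiveIdempotent (σ e) := by
  obtain ⟨hidem, hne, hmin⟩ := he
  refine ⟨hidem.map σ, (map_ne_zero_iff σ σ.injective).mpr hne, fun f hf hfe => ?_⟩
  have hf' : IsIdempotentElem (σ.symm f) := by simpa using hf.map σ.symm
  have hfe' : σ.symm f * e = σ.symm f := by simpa using congrArg σ.symm hfe
  rcases hmin _ hf' hfe' with h | h
  · exact .inl (by simpa using congrArg σ h)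
  · exact .inr (by simpa using congrArg σ h)

theorem Pi.isPrimitiveIdempotent_single_one {ι : Type*} [DecidableEq ι] {K : ι → Type*}
    [∀ i, CommRing (K i)] [∀ i, IsDomain (K i)] (i : ι) :
    IsPrimitiveIdempotent (Pi.single i 1 : ∀ i, K i) := by
  refine ⟨by simp [IsIdempotentElem, ← Pi.single_mul], by simp, fun f hf hfi => ?_⟩
  have hf_single : f = Pi.single i (f i) := funext fun j => by
    by_cases hj : j = i
    · subst hj
      simp
    · simpa [hj] using (congrFun hfi j).symm
  rcases IsIdempotentElem.iff_eq_zero_or_one.mp (hf.map (Pi.evalRingHom K i)) with h | h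
  · exact .inl (by rw [hf_single, show f i = 0 from h, Pi.single_zero])
  · exact .inr (by rw [hf_single, show f i = 1 from h])

namespace IsArtinianRing

variable {R : Type*} [CommRing R] [IsArtinianRing R] [IsReduced R]

theorem eq_zero_of_forall_mem_maximal {x : R} (hx : ∀ m : MaximalSpectrum R, x ∈ m.asIdeal) :
    x = 0 :=
  (equivPi R).injective <| funext fun m => by
    rw [map_zero]
    exact Ideal.Quotient.eq_zero_iff_mem.mpr (hx m)

theorem exists_isPrimitiveIdempotent_mem_iff (m : MaximalSpectrum R) :
    ∃ e : R, IsPrimitiveIdempotent e ∧ ∀ m' : MaximalSpectrum R, e ∈ m'.asIdeal ↔ m' ≠ m := by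
  classical
  refine ⟨(equivPi R).symm (Pi.single m 1),
    (Pi.isPrimitiveIdempotent_single_one m).map (equivPi R).symm.toRingEquiv, fun m' => ?_⟩
  rw [← Ideal.Quotient.eq_zero_iff_mem, ← equivPi_apply, AlgEquiv.apply_symm_apply]
  by_cases h : m' = m
  · subst h
    simp
  · simp [h]

theorem exists_smul_eq_of_isPrimitiveIdempotent {G : Type*} [Group G] [MulSemiringAction G R]
    (htrans : ∀ e e' : R, IsPrimitiveIdempotent e → IsPrimitiveIdempotent e' →
      ∃ g : G, g • e = e')
    (m m' : MaximalSpectrum R) : ∃ g : G, g • m.asIdeal = m'.asIdeal := by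
  obtain ⟨e, he, hem⟩ := exists_isPrimitiveIdempotent_mem_iff m
  obtain ⟨e', he', hem'⟩ := exists_isPrimitiveIdempotent_mem_iff m'
  obtain ⟨g, rfl⟩ := htrans e e' he he'
  -- `g • m` is the unique maximal ideal not containing `g • e`
  let gm : MaximalSpectrum R := ⟨g • m.asIdeal, isMaximal_of_isPrime _⟩
  have hgm : gm = m' := not_not.mp fun hne =>
    (hem m).mp (Ideal.smul_mem_pointwise_smul_iff.mp ((hem' gm).mpr hne)) rfl
  exact ⟨g, congrArg MaximalSpectrum.asIdeal hgm⟩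

end IsArtinianRing

open Module Subgroup MulAction

theorem mem_centralizer_range_iff {R A G : Type*} [CommSemiring R] [Semiring A] [Algebra R A]
    [Group G] (ρ : G →* A ≃ₐ[R] A) (σ : A ≃ₐ[R] A) :
    σ ∈ centralizer (ρ.range : Set (A ≃ₐ[R] A)) ↔ ∀ (g : G) (x : A), σ (ρ g x) = ρ g (σ x) := by
  simp only [mem_centralizer_iff, MonoidHom.coe_range, Set.forall_mem_range, AlgEquiv.ext_iff,
    AlgEquiv.mul_apply, eq_comm]

theorem AlgEquiv.card_le_finrank (F A : Type*) [Field F] [CommRing A] [IsDomain A] [Algebra F A]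
    [Module.Finite F A] : Nat.card (A ≃ₐ[F] A) ≤ finrank F A :=
  (Nat.card_le_card_of_injective _ AlgEquiv.coe_toAlgHom_injective).trans
    (card_algHom_le_finrank F A A)

section

variable {F L : Type*} [Field F] [CommRing L] [Algebra F L]

theorem finrank_quotient_smul (σ : L ≃ₐ[F] L) (I : Ideal L) :
    finrank F (L ⧸ σ • I) = finrank F (L ⧸ I) :=
  (Ideal.quotientEquivAlg I (σ • I) σ rfl).toLinearEquiv.finrank_eq.symm

variable [IsArtinianRing L] [IsReduced L] (H : Subgroup (L ≃ₐ[F] L))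

theorem eq_of_sub_mem_of_mem_centralizer {m₀ : Ideal L}
    (hH : ∀ m : MaximalSpectrum L, ∃ h ∈ H, h • m₀ = m.asIdeal) {σ τ : L ≃ₐ[F] L}
    (hσ : σ ∈ centralizer (H : Set (L ≃ₐ[F] L))) (hτ : τ ∈ centralizer (H : Set (L ≃ₐ[F] L)))
    (hστ : ∀ x, σ x - τ x ∈ m₀) : σ = τ := by
  ext x
  refine sub_eq_zero.mp (IsArtinianRing.eq_zero_of_forall_mem_maximal fun m => ?_)
  obtain ⟨h, hhH, hm⟩ := hH m
  have hcomm : ∀ ν ∈ centralizer (H : Set (L ≃ₐ[F] L)), h⁻¹ • ν x = ν (h⁻¹ • x) :=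
    fun ν hν => by
      simp only [AlgEquiv.smul_def, ← AlgEquiv.mul_apply, mem_centralizer_iff.mp hν _ (inv_mem hhH)]
  rw [← hm, Ideal.mem_pointwise_smul_iff_inv_smul_mem, smul_sub, hcomm σ hσ, hcomm τ hτ]
  exact hστ _

variable [Module.Finite F L]

theorem AlgEquiv.finite_of_isReduced : Finite (L ≃ₐ[F] L) :=
  .of_injective (fun σ (m : MaximalSpectrum L) => (Ideal.Quotient.mkₐ F m.asIdeal).comp σ.toAlgHom)
    fun _ _ h => AlgEquiv.ext fun x => (IsArtinianRing.equivPi L).injective <| funext fun m =>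
      DFunLike.congr_fun (congrFun h m) x

theorem finrank_eq_card_maximalSpectrum_mul (m₀ : MaximalSpectrum L)
    (h : ∀ m : MaximalSpectrum L, finrank F (L ⧸ m.asIdeal) = finrank F (L ⧸ m₀.asIdeal)) :
    finrank F L = Nat.card (MaximalSpectrum L) * finrank F (L ⧸ m₀.asIdeal) := by
  have := Fintype.ofFinite (MaximalSpectrum L)
  rw [((IsArtinianRing.equivPi L).restrictScalars F).toLinearEquiv.finrank_eq,
    finrank_pi_fintype, Finset.sum_congr rfl fun m _ => h m, Finset.sum_const, smul_eq_mul,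
    Finset.card_univ, Nat.card_eq_fintype_card]

theorem card_stabilizer_centralizer_le (m₀ : MaximalSpectrum L)
    (hH : ∀ m : MaximalSpectrum L, ∃ h ∈ H, h • m₀.asIdeal = m.asIdeal) :
    Nat.card (stabilizer (centralizer (H : Set (L ≃ₐ[F] L))) m₀.asIdeal) ≤
      finrank F (L ⧸ m₀.asIdeal) := by
  let induced (τ : stabilizer (centralizer (H : Set (L ≃ₐ[F] L))) m₀.asIdeal) :
      (L ⧸ m₀.asIdeal) ≃ₐ[F] (L ⧸ m₀.asIdeal) :=
    Ideal.quotientEquivAlg _ _ τ.1.1 τ.2.symm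
  have hinduced : Function.Injective induced := fun τ₁ τ₂ h => by
    refine Subtype.ext <| Subtype.ext <| eq_of_sub_mem_of_mem_centralizer H hH τ₁.1.2 τ₂.1.2
      fun x => Ideal.Quotient.eq.mp ?_
    exact DFunLike.congr_fun h (Ideal.Quotient.mk _ x)
  have : Finite ((L ⧸ m₀.asIdeal) ≃ₐ[F] (L ⧸ m₀.asIdeal)) :=
    .of_injective _ AlgEquiv.coe_toAlgHom_injective
  exact (Nat.card_le_card_of_injective induced hinduced).trans (AlgEquiv.card_le_finrank F _)

theorem card_centralizer_le_finrank [Nontrivial L]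
    (hH : ∀ m m' : MaximalSpectrum L, ∃ h ∈ H, h • m.asIdeal = m'.asIdeal) :
    Nat.card (centralizer (H : Set (L ≃ₐ[F] L))) ≤ finrank F L := by
  obtain ⟨M₀, hM₀⟩ := Ideal.exists_maximal L
  let m₀ : MaximalSpectrum L := ⟨M₀, hM₀⟩
  set C := centralizer (H : Set (L ≃ₐ[F] L))
  have horbit : orbit C m₀.asIdeal ⊆ Set.range MaximalSpectrum.asIdeal := by
    rintro _ ⟨c, rfl⟩
    exact ⟨⟨c • m₀.asIdeal, IsArtinianRing.isMaximal_of_isPrime _⟩, rfl⟩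
  have hdeg (m : MaximalSpectrum L) : finrank F (L ⧸ m.asIdeal) = finrank F (L ⧸ m₀.asIdeal) := by
    obtain ⟨h, -, hm⟩ := hH m₀ m
    rw [← hm, finrank_quotient_smul]
  calc Nat.card C = (orbit C m₀.asIdeal).ncard * Nat.card (stabilizer C m₀.asIdeal) := by
        rw [← index_stabilizer, mul_comm, card_mul_index]
    _ ≤ Nat.card (MaximalSpectrum L) * finrank F (L ⧸ m₀.asIdeal) := by
        gcongr
        · rw [← Set.ncard_range_of_injective fun _ _ => MaximalSpectrum.ext]
          exact Set.ncard_le_ncard horbit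
        · exact card_stabilizer_centralizer_le H m₀ (hH m₀)
    _ = finrank F L := (finrank_eq_card_maximalSpectrum_mul m₀ hdeg).symm

end

/-- Every `G`-structured `F`-algebra has exactly `|G|` automorphisms as a `G`-structured
algebra, i.e. `F`-algebra automorphisms commuting with the `G`-action. -/
theorem stmt2 (F : Type) [Field F] (G : Type) [CommGroup G] [Finite G]
    (L : GStructuredAlgebra F G) :
    Nat.card {σ : L.carrier ≃ₐ[F] L.carrier //
        ∀ (g : G) (x : L.carrier), σ (L.action g x) = L.action g (σ x)} = Nat.card G := by
  have := L.etale
  have : Module.Finite F L.carrier := Algebra.FormallyUnramified.finite_of_free F L.carrier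
  have : IsReduced L.carrier := Algebra.FormallyUnramified.isReduced_of_field F L.carrier
  have : IsArtinianRing L.carrier := .of_finite F L.carrier
  have : Nontrivial L.carrier := Module.nontrivial_of_finrank_pos (L.finrank_eq ▸ Nat.card_pos)
  set H := L.action.range
  have hH (m m' : MaximalSpectrum L.carrier) : ∃ h ∈ H, h • m.asIdeal = m'.asIdeal := by
    obtain ⟨h, hh⟩ := IsArtinianRing.exists_smul_eq_of_isPrimitiveIdempotent (G := H)
      (fun e e' he he' =>
        let ⟨g, hg⟩ := L.transitive e e' he he'
        ⟨⟨_, g, rfl⟩, hg⟩) m m'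
    exact ⟨h, h.2, hh⟩
  have := AlgEquiv.finite_of_isReduced (F := F) (L := L.carrier)
  rw [Nat.card_congr (Equiv.subtypeEquivRight (mem_centralizer_range_iff L.action)).symm]
  refine le_antisymm ((card_centralizer_le_finrank H hH).trans L.finrank_eq.le) ?_
  calc Nat.card G = Nat.card H := Nat.card_congr (MonoidHom.ofInjective L.action_injective).toEquiv
    _ ≤ _ := Subgroup.card_le_of_le (le_centralizer H)
end

section
/- Let A be an event in a probability space with 0 < Pr(A) < 1. Suppose events E₁ and E₂ are independent, are conditionally independent given A, and Pr(E_i | A) ≠ Pr(E_i) for i = 1, 2. Then E₁ and E₂ are not conditionally independent given the complement of A. -/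
open MeasureTheory ProbabilityTheory

/-! Write `a = Pr(A)`, `b = Pr(Aᶜ)`, `cᵢ = Pr(Eᵢ | A)` and `dᵢ = Pr(Eᵢ | Aᶜ)`. If `E₁, E₂` were
conditionally independent given both `A` and `Aᶜ`, the law of total probability would turn
independence into `(a c₁ + b d₁)(a c₂ + b d₂) = a c₁ c₂ + b d₁ d₂`. Since `a + b = 1`, the
difference of the two sides is `a b (c₁ - d₁)(c₂ - d₂)`, so `cᵢ = dᵢ` for some `i`, and then
`Pr(Eᵢ) = a cᵢ + b dᵢ = cᵢ`. -/

theorem eq_or_eq_of_mix_mul_mix_eq {R : Type*} [CommRing R] [NoZeroDivisors R]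
    {a b c₁ c₂ d₁ d₂ : R} (hab : a + b = 1) (ha : a ≠ 0) (hb : b ≠ 0)
    (h : (a * c₁ + b * d₁) * (a * c₂ + b * d₂) = a * (c₁ * c₂) + b * (d₁ * d₂)) :
    c₁ = d₁ ∨ c₂ = d₂ := by
  have key : a * b * ((c₁ - d₁) * (c₂ - d₂)) = 0 := by
    linear_combination (-1 : R) * h + (a * c₁ * c₂ + b * d₁ * d₂) * hab
  simpa only [mul_eq_zero, ha, hb, or_false, false_or, sub_eq_zero] using key

section

variable {Ω : Type*} [MeasurableSpace Ω] {μ : Measure Ω} {A : Set Ω}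

theorem toReal_measure_eq_cond_mix [IsFiniteMeasure μ] (hA : MeasurableSet A) (E : Set Ω) :
    (μ E).toReal = (μ A).toReal * (μ[E | A]).toReal + (μ Aᶜ).toReal * (μ[E | Aᶜ]).toReal := by
  rw [← cond_add_cond_compl_eq hA μ, ENNReal.toReal_add (by finiteness) (by finiteness),
    ENNReal.toReal_mul, ENNReal.toReal_mul, mul_comm, mul_comm (μ[E | Aᶜ]).toReal]

theorem cond_eq_measure_of_cond_eq_cond_compl [IsProbabilityMeasure μ] (hA : MeasurableSet A)
    {E : Set Ω} (h : μ[E | A] = μ[E | Aᶜ]) : μ[E | A] = μ E := by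
  rw [← cond_add_cond_compl_eq hA μ, ← h, ← mul_add, measure_add_measure_compl hA, measure_univ,
    mul_one]

end

theorem stmt8_general {Ω : Type*} [MeasurableSpace Ω] (μ : Measure Ω) [IsProbabilityMeasure μ]
    (A E₁ E₂ : Set Ω) (hA : MeasurableSet A)
    (hA0 : 0 < μ A) (hA1 : μ A < 1)
    (hind : μ (E₁ ∩ E₂) = μ E₁ * μ E₂)
    (hcond : μ[E₁ ∩ E₂ | A] = μ[E₁ | A] * μ[E₂ | A])
    (hne1 : μ[E₁ | A] ≠ μ E₁) (hne2 : μ[E₂ | A] ≠ μ E₂) :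
    μ[E₁ ∩ E₂ | Aᶜ] ≠ μ[E₁ | Aᶜ] * μ[E₂ | Aᶜ] := by
  intro hcondc
  have ha : (μ A).toReal ≠ 0 := ENNReal.toReal_ne_zero.2 ⟨hA0.ne', measure_ne_top μ A⟩
  have hb : (μ Aᶜ).toReal ≠ 0 := by
    rw [prob_compl_eq_one_sub hA]
    exact ENNReal.toReal_ne_zero.2 ⟨(tsub_pos_of_lt hA1).ne', ENNReal.sub_ne_top ENNReal.one_ne_top⟩
  have hab : (μ A).toReal + (μ Aᶜ).toReal = 1 := by
    rw [← ENNReal.toReal_add (measure_ne_top μ A) (measure_ne_top μ Aᶜ),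
      measure_add_measure_compl hA, measure_univ, ENNReal.toReal_one]
  have hmix := congrArg ENNReal.toReal hind
  rw [ENNReal.toReal_mul, toReal_measure_eq_cond_mix hA, toReal_measure_eq_cond_mix hA E₁,
    toReal_measure_eq_cond_mix hA E₂, hcond, hcondc, ENNReal.toReal_mul, ENNReal.toReal_mul]
    at hmix
  have cond_ne_cond_compl {E : Set Ω} (hne : μ[E | A] ≠ μ E) :
      (μ[E | A]).toReal ≠ (μ[E | Aᶜ]).toReal := fun h =>
    hne <| cond_eq_measure_of_cond_eq_cond_compl hA <|
      (ENNReal.toReal_eq_toReal_iff' (measure_ne_top _ _) (measure_ne_top _ _)).1 h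
  rcases eq_or_eq_of_mix_mul_mix_eq hab ha hb hmix.symm with h | h
  exacts [cond_ne_cond_compl hne1 h, cond_ne_cond_compl hne2 h]

/-- If `0 < Pr(A) < 1`, `E₁, E₂` are independent, conditionally independent given `A`, and
`Pr(Eᵢ | A) ≠ Pr(Eᵢ)` for `i = 1, 2`, then `E₁` and `E₂` are not conditionally independent
given the complement of `A`. -/
theorem stmt8 {Ω : Type*} [MeasurableSpace Ω] (μ : Measure Ω) [IsProbabilityMeasure μ]
    (A E₁ E₂ : Set Ω) (hA : MeasurableSet A) (hE₁ : MeasurableSet E₁) (hE₂ : MeasurableSet E₂)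
    (hA0 : 0 < μ A) (hA1 : μ A < 1)
    (hind : μ (E₁ ∩ E₂) = μ E₁ * μ E₂)
    (hcond : μ[E₁ ∩ E₂ | A] = μ[E₁ | A] * μ[E₂ | A])
    (hne1 : μ[E₁ | A] ≠ μ E₁) (hne2 : μ[E₂ | A] ≠ μ E₂) :
    μ[E₁ ∩ E₂ | Aᶜ] ≠ μ[E₁ | Aᶜ] * μ[E₂ | Aᶜ] :=
  stmt8_general μ A E₁ E₂ hA hA0 hA1 hind hcond hne1 hne2
end

section
/- Let p be a prime and G = ℤ/p²ℤ. Define c_G(g) to be the p-adic-additive valuation-based discriminant exponent: c_G(g) = p² − p if g has order p, c_G(g) = p² − 1 if g has order p², and c_G(1) = 0. Then the minimum-value set 𝔐 = {g : c_G(g) = p² − p} equals the subgroup pℤ/p²ℤ minus the identity, and 𝔐 ∩ G_{p²} = 𝔐 does not generate G_{p²} = G. Hence the discriminant counting function on ℤ/p²ℤ is not fair. -/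
/-!
In `ZMod (p ^ 2)` the elements killed by `p` are exactly the multiples of `p`, so the elements of
order `p` are the nonzero multiples of `p`. Since `c` takes its minimum nonzero value exactly there,
the minimum-value set lies in the proper subgroup `pℤ/p²ℤ` and cannot generate.
-/

open AddSubgroup

namespace ZMod

variable {p : ℕ}

theorem mem_zmultiples_natCast_iff_nsmul_eq_zero [NeZero p] (g : ZMod (p ^ 2)) :
    g ∈ zmultiples (p : ZMod (p ^ 2)) ↔ p • g = 0 := by
  constructor
  · rintro ⟨k, rfl⟩
    rw [smul_comm, nsmul_eq_mul, ← Nat.cast_mul, ← pow_two, natCast_self, smul_zero]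
  · intro h
    have hdvd : p * p ∣ p * g.val := by
      rw [← pow_two, ← natCast_eq_zero_iff, Nat.cast_mul, natCast_zmod_val, ← nsmul_eq_mul, h]
    obtain ⟨m, hm⟩ : p ∣ g.val := Nat.dvd_of_mul_dvd_mul_left (NeZero.pos p) hdvd
    refine ⟨m, ?_⟩
    rw [← natCast_zmod_val g, hm, Nat.cast_mul, mul_comm]
    simp

theorem addOrderOf_eq_prime_iff (hp : p.Prime) (g : ZMod (p ^ 2)) :
    addOrderOf g = p ↔ g ∈ zmultiples (p : ZMod (p ^ 2)) ∧ g ≠ 0 := by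
  have := Fact.mk hp
  rw [mem_zmultiples_natCast_iff_nsmul_eq_zero]
  refine ⟨fun h => ⟨?_, ?_⟩, fun ⟨h, hg⟩ => addOrderOf_eq_prime h hg⟩
  · exact addOrderOf_dvd_iff_nsmul_eq_zero.mp h.dvd
  · rintro rfl
    exact hp.one_lt.ne (addOrderOf_zero.symm.trans h)

theorem zmultiples_natCast_ne_top (hp : 1 < p) : zmultiples (p : ZMod (p ^ 2)) ≠ ⊤ := by
  have : NeZero p := ⟨by omega⟩
  intro h
  have h1 : p • (1 : ZMod (p ^ 2)) = 0 :=
    (mem_zmultiples_natCast_iff_nsmul_eq_zero 1).mp (h ▸ mem_top 1)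
  rw [nsmul_one, natCast_eq_zero_iff] at h1
  exact absurd (Nat.le_of_dvd (by omega) h1) (by nlinarith)

theorem addOrderOf_eq_one_or_eq_prime_or_eq_sq (hp : p.Prime) (g : ZMod (p ^ 2)) :
    addOrderOf g = 1 ∨ addOrderOf g = p ∨ addOrderOf g = p ^ 2 := by
  have : NeZero p := ⟨hp.ne_zero⟩
  have hdvd : addOrderOf g ∣ p ^ 2 := by
    simpa only [Nat.card_eq_fintype_card, card] using addOrderOf_dvd_natCard g
  obtain ⟨i, hi, he⟩ := (Nat.dvd_prime_pow hp).mp hdvd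
  interval_cases i <;> simp_all

end ZMod

/-- Unfairness of the discriminant counting function on `G = ℤ/p²ℤ`: for the discriminant
exponent function `c` (`c g = p² − p` for `g` of order `p`, `c g = p² − 1` for `g` of order
`p²`, `c 1 = 0`), the minimum-value set `𝔐 = {g : c g = p² − p}` is exactly the subgroup
`pℤ/p²ℤ` minus the identity, and `𝔐` does not generate `G_{p²} = G`. -/
theorem stmt10 (p : ℕ) (hp : p.Prime) (c : ZMod (p ^ 2) → ℕ)
    (hc0 : c 0 = 0)
    (hcp : ∀ g : ZMod (p ^ 2), addOrderOf g = p → c g = p ^ 2 - p)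
    (hcp2 : ∀ g : ZMod (p ^ 2), addOrderOf g = p ^ 2 → c g = p ^ 2 - 1) :
    {g : ZMod (p ^ 2) | c g = p ^ 2 - p} =
      ((AddSubgroup.zmultiples (p : ZMod (p ^ 2)) : Set (ZMod (p ^ 2))) \ {0}) ∧
    AddSubgroup.closure {g : ZMod (p ^ 2) | c g = p ^ 2 - p} ≠ ⊤ := by
  have hp1 := hp.one_lt
  have hp_lt_sq : p < p ^ 2 := by nlinarith
  have hmin : ∀ g, c g = p ^ 2 - p ↔ addOrderOf g = p := by
    refine fun g => ⟨fun hg => ?_, hcp g⟩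
    rcases ZMod.addOrderOf_eq_one_or_eq_prime_or_eq_sq hp g with h | h | h
    · rw [AddMonoid.addOrderOf_eq_one_iff.mp h, hc0] at hg
      omega
    · exact h
    · rw [hcp2 g h] at hg
      omega
  have hset : {g : ZMod (p ^ 2) | c g = p ^ 2 - p} =
      ((zmultiples (p : ZMod (p ^ 2)) : Set (ZMod (p ^ 2))) \ {0}) := by
    ext g
    simp only [Set.mem_ofPred_eq, hmin, ZMod.addOrderOf_eq_prime_iff hp]
    rfl
  refine ⟨hset, ne_top_of_le_ne_top (ZMod.zmultiples_natCast_ne_top hp1) ?_⟩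
  rw [closure_le, hset]
  exact Set.sdiff_subset
end

section
/- Let G be a finite abelian group of exponent dividing N and let c_G be induced by the Artin conductor of the representation ⊕_i f_i, where G = ∏_{i=1}^k ℤ/n_iℤ and f_i : G → ℂ^× is the projection onto the i-th factor composed with an injective character. Then c_G(g) = #{i : g_i ≠ 0}, the minimum m equals 1, 𝔐 is the set of elements with exactly one nonzero coordinate, and for every r the set 𝔐 ∩ G_r generates G_r; i.e., this Artin conductor is a fair counting function. -/
/-! The conductor counts the nonzero coordinates of `g`. Every `g` is the sum of its coordinates
`Pi.single i (g i)`; the nonzero ones have conductor `1` and are killed by `r` whenever `g` is,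
so they generate the `r`-torsion. -/

open Finset

namespace Pi

variable {ι : Type*} {M : ι → Type*}

theorem nsmul_single_eq_zero [DecidableEq ι] [∀ i, AddMonoid (M i)] {g : ∀ i, M i} {r : ℕ}
    (hg : r • g = 0) (i : ι) : r • Pi.single i (g i) = 0 := by
  rw [← Pi.single_nsmul, ← Pi.smul_apply, hg, Pi.zero_apply, Pi.single_zero]

variable [Fintype ι]

section Zero

variable [∀ i, Zero (M i)] [∀ i, DecidableEq (M i)]

theorem card_filter_ne_zero_pos {g : ∀ i, M i} (hg : g ≠ 0) : 0 < #{i | g i ≠ 0} := by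
  obtain ⟨i, hi⟩ := Function.ne_iff.mp hg
  exact card_pos.mpr ⟨i, by simpa using hi⟩

theorem card_filter_ne_zero_eq_one_iff {g : ∀ i, M i} :
    #{i | g i ≠ 0} = 1 ↔ ∃ i, g i ≠ 0 ∧ ∀ j, j ≠ i → g j = 0 := by
  simp only [card_eq_one, eq_singleton_iff_unique_mem, mem_filter, mem_univ, true_and]
  refine exists_congr fun i => and_congr_right fun _ => forall_congr' fun j => ?_
  rw [not_imp_comm]

theorem card_filter_single_ne_zero [DecidableEq ι] {i : ι} {x : M i} (hx : x ≠ 0) :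
    #{j | Pi.single i x j ≠ 0} = 1 :=
  card_filter_ne_zero_eq_one_iff.mpr
    ⟨i, by simpa using hx, fun _ hj => Pi.single_eq_of_ne hj x⟩

end Zero

theorem closure_inter_card_filter_ne_zero_eq_one [DecidableEq ι] [∀ i, AddGroup (M i)]
    [∀ i, DecidableEq (M i)] {S : Set (∀ i, M i)}
    (hS : ∀ g ∈ S, ∀ i, Pi.single i (g i) ∈ S) :
    AddSubgroup.closure ({g | #{i | g i ≠ 0} = 1} ∩ S) = AddSubgroup.closure S := by
  refine le_antisymm (AddSubgroup.closure_mono Set.inter_subset_right) ?_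
  refine (AddSubgroup.closure_le _).mpr fun g hg =>
    AddSubgroup.pi_mem_of_single_mem g fun i => ?_
  by_cases hgi : g i = 0
  · simp [hgi]
  · exact AddSubgroup.subset_closure ⟨card_filter_single_ne_zero hgi, hS g hg i⟩

end Pi

/-- Fairness of the Artin conductor of `⊕ᵢ fᵢ` on `G = ∏ᵢ ℤ/nᵢℤ`, where `fᵢ` is the `i`-th
projection composed with an injective character: the conductor exponent is
`c g = #{i : gᵢ ≠ 0}`, its nonzero minimum is `m = 1`, the minimum set `𝔐 = {g : c g = 1}` is
the set of elements with exactly one nonzero coordinate, and for every `r` the set `𝔐 ∩ G_r`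
generates the `r`-torsion subgroup `G_r`. -/
theorem stmt11 (k : ℕ) (hk : 0 < k) (n : Fin k → ℕ) (hn : ∀ i, 2 ≤ n i)
    (c : (∀ i, ZMod (n i)) → ℕ)
    (hc : ∀ g, c g = (Finset.univ.filter fun i => g i ≠ 0).card) :
    IsLeast {m : ℕ | ∃ g : ∀ i, ZMod (n i), g ≠ 0 ∧ c g = m} 1 ∧
    ({g : ∀ i, ZMod (n i) | c g = 1} =
      {g : ∀ i, ZMod (n i) | ∃ i, g i ≠ 0 ∧ ∀ j, j ≠ i → g j = 0}) ∧
    (∀ r : ℕ,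
      AddSubgroup.closure
          ({g : ∀ i, ZMod (n i) | c g = 1} ∩ {g : ∀ i, ZMod (n i) | r • g = 0}) =
        AddSubgroup.closure {g : ∀ i, ZMod (n i) | r • g = 0}) := by
  obtain rfl : c = _ := funext hc
  have : ∀ i, Fact (1 < n i) := fun i => ⟨hn i⟩
  refine ⟨⟨?_, ?_⟩, ?_, fun r => ?_⟩
  · exact ⟨Pi.single ⟨0, hk⟩ 1, Pi.single_ne_zero_iff.mpr one_ne_zero,
      Pi.card_filter_single_ne_zero one_ne_zero⟩
  · rintro m ⟨g, hg, rfl⟩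
    exact Pi.card_filter_ne_zero_pos hg
  · ext g
    exact Pi.card_filter_ne_zero_eq_one_iff
  · exact Pi.closure_inter_card_filter_ne_zero_eq_one fun g hg i => Pi.nsmul_single_eq_zero hg i
end

section
/- Let G = ∏_{i=1}^k ℤ/n_iℤ with projections f_i, viewed as characters, and consider the representation R = (⊗_i f_i) ⊕ (⊕_i f_i). For g ∈ G write c(g) = (k+1) − #{i : g_i = 0} − [Σ_i (images under f_i) trivial on g], i.e., c(g) counts the f_i and ⊗f_i not killing g. Then every element of G with exactly one nonzero coordinate lies in 𝔐 = c^{-1}(min_{g≠1} c(g)), and hence for all r the set 𝔐 ∩ G_r generates G_r (the Artin conductor of R is fair). -/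
/-!
A nonzero `g` has `c g ≥ #{i | gᵢ ≠ 0} ≥ 1`, and equality `#{i | gᵢ ≠ 0} = 1` forces `g` to be a
single coordinate `a ∈ ℤ/nᵢℤ`, on which `⊗ᵢ fᵢ` is `a/nᵢ ≠ 0` in `ℚ/ℤ`; so `min c = 2`, attained
exactly at the single-coordinate elements. Every `r`-torsion element is the sum of its coordinates,
each of which is again `r`-torsion and single-coordinate, hence in `𝔐`.
-/

open Finset

section PiSingle

variable {ι : Type*} [DecidableEq ι] {M : ι → Type*}

theorem eq_pi_single_of_forall_ne [∀ i, Zero (M i)] {g : ∀ i, M i} {i : ι}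
    (h : ∀ j, j ≠ i → g j = 0) : g = Pi.single i (g i) := by
  funext j
  obtain rfl | hji := eq_or_ne j i
  · simp
  · rw [h j hji, Pi.single_eq_of_ne hji]

variable [Fintype ι]

theorem AddSubgroup.closure_inter_setOf_nsmul_eq_zero_of_pi_single_mem [∀ i, AddCommGroup (M i)]
    {S : Set (∀ i, M i)} (hS : ∀ i (a : M i), a ≠ 0 → Pi.single i a ∈ S) (r : ℕ) :
    AddSubgroup.closure (S ∩ {g | r • g = 0}) = AddSubgroup.closure {g | r • g = 0} := by
  refine le_antisymm (AddSubgroup.closure_mono Set.inter_subset_right) ?_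
  refine AddSubgroup.closure_le _ |>.2 fun g (hg : r • g = 0) => ?_
  rw [← Finset.univ_sum_single g]
  refine AddSubgroup.sum_mem _ fun i _ => ?_
  by_cases hgi : g i = 0
  · simp [hgi]
  · have hri : r • g i = 0 := by simpa using congrFun hg i
    exact AddSubgroup.subset_closure ⟨hS i _ hgi, by simp [← Pi.single_smul, hri]⟩

end PiSingle

section ConductorExponent

variable {ι : Type*} [Fintype ι] [DecidableEq ι] {M : ι → Type*} [∀ i, Zero (M i)]
  [∀ i, DecidableEq (M i)] {A : Type*} [Zero A] [DecidableEq A]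

/-- The tame conductor exponent of `χ ⊕ (⊕ᵢ fᵢ)`, where `fᵢ` is the `i`-th projection:
the number of these characters that do not kill `g`. -/
def conductorExponent (χ : (∀ i, M i) → A) (g : ∀ i, M i) : ℕ :=
  #{i | g i ≠ 0} + if χ g = 0 then 0 else 1

variable {χ : (∀ i, M i) → A} (hχ : ∀ i (a : M i), a ≠ 0 → χ (Pi.single i a) ≠ 0)
include hχ

theorem conductorExponent_pi_single {i : ι} {a : M i} (ha : a ≠ 0) :
    conductorExponent χ (Pi.single i a) = 2 := by
  have hsupp : #{j | (Pi.single i a : ∀ j, M j) j ≠ 0} = 1 := by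
    refine card_eq_one.2 ⟨i, ?_⟩
    ext j
    obtain rfl | hji := eq_or_ne j i <;> simp [*]
  rw [conductorExponent, hsupp, if_neg (hχ i a ha)]

theorem two_le_conductorExponent {g : ∀ i, M i} (hg : g ≠ 0) : 2 ≤ conductorExponent χ g := by
  have hpos : 0 < #{i | g i ≠ 0} :=
    card_pos.2 <| filter_nonempty_iff.2 <| by simpa [funext_iff] using hg
  by_cases hone : #{i | g i ≠ 0} = 1
  · obtain ⟨i, hi⟩ := card_eq_one.1 hone
    have hsupp : ∀ j, g j ≠ 0 ↔ j = i := fun j => by simpa using congrArg (j ∈ ·) hi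
    have hrest : ∀ j, j ≠ i → g j = 0 := fun j hji => not_not.1 (mt (hsupp j).1 hji)
    have hgi : g i ≠ 0 := (hsupp i).2 rfl
    rw [eq_pi_single_of_forall_ne hrest, conductorExponent_pi_single hχ hgi]
  · unfold conductorExponent
    omega

theorem pi_single_isMin_conductorExponent {i : ι} {a : M i} (ha : a ≠ 0) :
    Pi.single i a ≠ 0 ∧ ∀ h, h ≠ 0 → conductorExponent χ (Pi.single i a) ≤ conductorExponent χ h :=
  ⟨Pi.single_ne_zero_iff.2 ha, fun _ hh =>
    (conductorExponent_pi_single hχ ha).trans_le (two_le_conductorExponent hχ hh)⟩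

end ConductorExponent

theorem ZMod.coe_val_div_ne_zero {n : ℕ} [NeZero n] {a : ZMod n} (ha : a ≠ 0) :
    (((a.val : ℚ) / n : ℚ) : AddCircle (1 : ℚ)) ≠ 0 := by
  have hn : (0 : ℚ) < n := by exact_mod_cast NeZero.pos n
  have hmem : (a.val : ℚ) / n ∈ Set.Ico 0 1 :=
    ⟨by positivity, (div_lt_one hn).2 (by exact_mod_cast a.val_lt)⟩
  rw [Ne, AddCircle.coe_eq_zero_iff_of_mem_Ico hmem, div_eq_zero_iff, not_or]
  exact ⟨by exact_mod_cast (ZMod.val_ne_zero a).2 ha, hn.ne'⟩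

theorem stmt12_general (k : ℕ) (n : Fin k → ℕ) (hn : ∀ i, 2 ≤ n i)
    (χ : (∀ i, ZMod (n i)) → AddCircle (1 : ℚ))
    (hχ : ∀ g, χ g = ∑ i, ((((g i).val : ℚ) / (n i : ℚ) : ℚ) : AddCircle (1 : ℚ)))
    (c : (∀ i, ZMod (n i)) → ℕ)
    (hc : ∀ g, c g =
      (Finset.univ.filter fun i => g i ≠ 0).card + (if χ g = 0 then 0 else 1)) :
    (∀ g : ∀ i, ZMod (n i), (∃ i, g i ≠ 0 ∧ ∀ j, j ≠ i → g j = 0) →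
      g ≠ 0 ∧ ∀ h : ∀ i, ZMod (n i), h ≠ 0 → c g ≤ c h) ∧
    (∀ r : ℕ,
      AddSubgroup.closure
          ({g : ∀ i, ZMod (n i) | g ≠ 0 ∧ ∀ h, h ≠ 0 → c g ≤ c h} ∩
            {g : ∀ i, ZMod (n i) | r • g = 0}) =
        AddSubgroup.closure {g : ∀ i, ZMod (n i) | r • g = 0}) := by
  have : ∀ i, NeZero (n i) := fun i => ⟨by have := hn i; omega⟩
  obtain rfl : c = conductorExponent χ := funext hc
  have hχ_single : ∀ i (a : ZMod (n i)), a ≠ 0 → χ (Pi.single i a) ≠ 0 := fun i a ha => by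
    rw [hχ, Fintype.sum_eq_single i fun j hji => by simp [Pi.single_eq_of_ne hji],
      Pi.single_eq_same]
    exact ZMod.coe_val_div_ne_zero ha
  have hmin := fun i (a : ZMod (n i)) (ha : a ≠ 0) =>
    pi_single_isMin_conductorExponent hχ_single ha
  refine ⟨fun g ⟨i, hgi, hrest⟩ => ?_,
    AddSubgroup.closure_inter_setOf_nsmul_eq_zero_of_pi_single_mem hmin⟩
  rw [eq_pi_single_of_forall_ne hrest]
  exact hmin i _ hgi

/-- Fairness of the Artin conductor of `(⊗ᵢ fᵢ) ⊕ (⊕ᵢ fᵢ)` on `G = ∏ᵢ ℤ/nᵢℤ`: with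
`χ g = Σᵢ gᵢ/nᵢ ∈ ℚ/ℤ` the character `⊗ᵢ fᵢ`, the conductor exponent is
`c g = #{i : gᵢ ≠ 0} + (1 if χ g ≠ 0 else 0)`; every element with exactly one nonzero
coordinate lies in the minimum set `𝔐`, and hence for all `r` the set `𝔐 ∩ G_r` generates the
`r`-torsion subgroup `G_r`. -/
theorem stmt12 (k : ℕ) (hk : 0 < k) (n : Fin k → ℕ) (hn : ∀ i, 2 ≤ n i)
    (χ : (∀ i, ZMod (n i)) → AddCircle (1 : ℚ))
    (hχ : ∀ g, χ g = ∑ i, ((((g i).val : ℚ) / (n i : ℚ) : ℚ) : AddCircle (1 : ℚ)))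
    (c : (∀ i, ZMod (n i)) → ℕ)
    (hc : ∀ g, c g =
      (Finset.univ.filter fun i => g i ≠ 0).card + (if χ g = 0 then 0 else 1)) :
    (∀ g : ∀ i, ZMod (n i), (∃ i, g i ≠ 0 ∧ ∀ j, j ≠ i → g j = 0) →
      g ≠ 0 ∧ ∀ h : ∀ i, ZMod (n i), h ≠ 0 → c g ≤ c h) ∧
    (∀ r : ℕ,
      AddSubgroup.closure
          ({g : ∀ i, ZMod (n i) | g ≠ 0 ∧ ∀ h, h ≠ 0 → c g ≤ c h} ∩
            {g : ∀ i, ZMod (n i) | r • g = 0}) =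
        AddSubgroup.closure {g : ∀ i, ZMod (n i) | r • g = 0}) :=
  stmt12_general k n hn χ hχ c hc
end

section
/- Let G be a finite abelian group and H a subgroup of index r. Let M be a Galois field extension of a field F with Galois group identified with H. Then the induced G-structured F-algebra Ind_H^G M is isomorphic as an F-algebra to M^{⊕ r}, and under the correspondence with homomorphisms G_F → G, Ind_H^G M corresponds to the composite G_F → Gal(M/F) ≅ H ⊂ G. -/
/-!
An element `f` of `Ind_H^G M` satisfies `f (h * q) = h • f q`, so it is determined by its values
on representatives `q` of the right cosets `H \ G`, and these values may be prescribed freely: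
hence `Ind_H^G M ≅ M ^ [G : H]`. Taking `q = 1` gives `f h = h • f 1` for `h ∈ H`; for
`h` the image of `σ` in `Gal(M/F) ≅ H` this says that evaluation at `1` intertwines `σ` with
`h`.
-/

open QuotientGroup

section Induced

variable {F A G : Type*} [CommSemiring F] [Semiring A] [Algebra F A] [Group G] {H : Subgroup G}

def inducedSubalgebra (ρ : H →* (A ≃ₐ[F] A)) : Subalgebra F (G → A) where
  carrier := {f | ∀ (h : H) (g : G), f (h * g) = ρ h (f g)}
  mul_mem' hf₁ hf₂ h g := by simp only [Pi.mul_apply, hf₁ h g, hf₂ h g, map_mul]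
  add_mem' hf₁ hf₂ h g := by simp only [Pi.add_apply, hf₁ h g, hf₂ h g, map_add]
  algebraMap_mem' c h g := ((ρ h).commutes c).symm

variable {ρ : H →* (A ≃ₐ[F] A)}

theorem apply_coe_eq_of_mem_inducedSubalgebra {f : G → A} (hf : f ∈ inducedSubalgebra ρ)
    (h : H) : f h = ρ h (f 1) := by
  simpa using hf h 1

namespace QuotientGroup

noncomputable def rightCosetOffset (H : Subgroup G) (g : G) : H :=
  ⟨g * (Quotient.mk (rightRel H) g).out⁻¹, rightRel_apply.mp (Quotient.mk_out g)⟩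

theorem rightCosetOffset_mul_out (H : Subgroup G) (g : G) :
    (rightCosetOffset H g : G) * (Quotient.mk (rightRel H) g).out = g :=
  inv_mul_cancel_right g _

theorem mk_rightRel_mul_left (h : H) (g : G) :
    Quotient.mk (rightRel H) (h * g) = Quotient.mk (rightRel H) g := by
  refine Quotient.sound (rightRel_apply.mpr ?_)
  simp [H.inv_mem h.2]

theorem rightCosetOffset_mul_left (h : H) (g : G) :
    rightCosetOffset H (h * g) = h * rightCosetOffset H g := by
  ext
  simp only [rightCosetOffset, mk_rightRel_mul_left, Subgroup.coe_mul, mul_assoc]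

theorem rightCosetOffset_out (q : Quotient (rightRel H)) : rightCosetOffset H q.out = 1 := by
  ext
  simp [rightCosetOffset, Quotient.out_eq]

end QuotientGroup

theorem apply_eq_of_mem_inducedSubalgebra {f : G → A} (hf : f ∈ inducedSubalgebra ρ) (g : G) :
    f g = ρ (rightCosetOffset H g) (f (Quotient.mk (rightRel H) g).out) := by
  conv_lhs => rw [← rightCosetOffset_mul_out H g]
  exact hf _ _

noncomputable def inducedSubalgebraEquivPi (ρ : H →* (A ≃ₐ[F] A)) :
    inducedSubalgebra ρ ≃ₐ[F] (Quotient (rightRel H) → A) :=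
  AlgEquiv.ofBijective
    (AlgHom.pi fun q => (Pi.evalAlgHom F (fun _ => A) q.out).comp (inducedSubalgebra ρ).val)
    ⟨fun f₁ f₂ hf => Subtype.ext <| funext fun g => by
      rw [apply_eq_of_mem_inducedSubalgebra f₁.2 g, apply_eq_of_mem_inducedSubalgebra f₂.2 g]
      exact congrArg _ (congrFun hf _),
    fun v => ⟨⟨fun g => ρ (rightCosetOffset H g) (v (Quotient.mk _ g)), fun h g => by
      simp only [rightCosetOffset_mul_left, mk_rightRel_mul_left, map_mul, AlgEquiv.mul_apply]⟩,
      funext fun q => by simp [rightCosetOffset_out, Quotient.out_eq]⟩⟩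

end Induced

theorem stmt19_general (F : Type) [Field F] (G : Type) [CommGroup G] [Finite G] (H : Subgroup G)
    (M : IntermediateField F (AlgebraicClosure F)) [IsGalois F M]
    (e : H ≃* (M ≃ₐ[F] M))
    (Ind : Subalgebra F (G → M))
    (hInd : ∀ f : G → M, f ∈ Ind ↔ ∀ (h : H) (g : G), f ((h : G) * g) = e h (f g)) :
    Nonempty (Ind ≃ₐ[F] (Fin H.index → M)) ∧
    ∀ (σ : AlgebraicClosure F ≃ₐ[F] AlgebraicClosure F) (f : Ind),
      σ ((f.1 1 : M) : AlgebraicClosure F) =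
        ((f.1 ((e.symm (AlgEquiv.restrictNormalHom M σ) : H) : G) : M) :
          AlgebraicClosure F) := by
  obtain rfl : Ind = inducedSubalgebra e.toMonoidHom := Subalgebra.ext hInd
  let cosetsEquivFin : Quotient (rightRel H) ≃ Fin H.index :=
    (quotientRightRelEquivQuotientLeftRel H).trans (Finite.equivFin _)
  refine ⟨⟨(inducedSubalgebraEquivPi _).trans
    (AlgEquiv.piCongrLeft F (fun _ => M) cosetsEquivFin)⟩, fun σ f => ?_⟩
  rw [apply_coe_eq_of_mem_inducedSubalgebra f.2, MulEquiv.coe_toMonoidHom,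
    MulEquiv.apply_symm_apply, AlgEquiv.restrictNormalHom_apply]

/-- Induction of a Galois `H`-extension to a `G`-structured algebra: let `G` be a finite
abelian group, `H ≤ G` a subgroup of index `r`, and `M` a finite Galois extension of `F`
(inside an algebraic closure) whose Galois group is identified with `H` via `e`.  Let
`Ind = Ind_H^G M` be the induced algebra, consisting of functions `f : G → M` with
`f(hg) = e(h)(f(g))`.  Then `Ind` is isomorphic as an `F`-algebra to `M^{⊕ r}`, and under the
correspondence between `G`-structured algebras and homomorphisms `G_F → G`, `Ind` corresponds
to the composite `G_F → Gal(M/F) ≅ H ⊆ G`: the evaluation map `ψ : f ↦ f(1)` into the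
algebraic closure intertwines the absolute Galois action with the `G`-action through this
composite homomorphism. -/
theorem stmt19 (F : Type) [Field F] (G : Type) [CommGroup G] [Finite G] (H : Subgroup G)
    (M : IntermediateField F (AlgebraicClosure F)) [FiniteDimensional F M] [IsGalois F M]
    (e : H ≃* (M ≃ₐ[F] M))
    (Ind : Subalgebra F (G → M))
    (hInd : ∀ f : G → M, f ∈ Ind ↔ ∀ (h : H) (g : G), f ((h : G) * g) = e h (f g)) :
    Nonempty (Ind ≃ₐ[F] (Fin H.index → M)) ∧
    ∀ (σ : AlgebraicClosure F ≃ₐ[F] AlgebraicClosure F) (f : Ind),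
      σ ((f.1 1 : M) : AlgebraicClosure F) =
        ((f.1 ((e.symm (AlgEquiv.restrictNormalHom M σ) : H) : G) : M) :
          AlgebraicClosure F) :=
  stmt19_general F G H M e Ind hInd
end
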